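/- arXiv:2503.18144 — 2 statements merged into one kernel-verified Lean document; each statement's English description precedes it below -/
import Mathlib

section
/- Let 𝓡 be a domain of weak orders over H that is not contained in any objective indifferences domain, i.e., there exist R_α, R_β in 𝓡 and houses h_1, h_2 with h_1 I_α h_2 but h_1 P_β h_2. Then there exists a preference profile R in 𝓡^n and a tie-breaking profile ≻ such that TTC_≻(R) is Pareto dominated by another allocation. Hence objective indifferences domains are exactly the maximal domains on which all TTC_≻ mechanisms are Pareto efficient. -/
open scoped Classical

namespace ShapleyScarf

/-- A weak preference relation: complete (total) and transitive, hence reflexive. -/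
structure WeakOrder (H : Type*) where
  rel : H → H → Prop
  total : ∀ a b, rel a b ∨ rel b a
  trans : ∀ a b c, rel a b → rel b c → rel a c

namespace WeakOrder
variable {H : Type*}
/-- Strict part `P` of a weak preference. -/
def P (R : WeakOrder H) (a b : H) : Prop := R.rel a b ∧ ¬ R.rel b a
/-- Indifference part `I` of a weak preference. -/
def I (R : WeakOrder H) (a b : H) : Prop := R.rel a b ∧ R.rel b a
end WeakOrder

/-- `lt` is a strict linear order on agents (a tie-breaking order). -/
def IsTieBreak {n : ℕ} (lt : Fin n → Fin n → Prop) : Prop :=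
  (∀ a b, a ≠ b → lt a b ∨ lt b a) ∧ Transitive lt ∧ ∀ a, ¬ lt a a

section Defs
variable {n : ℕ} {H : Type*} {B : Type*}

/-- Strict part of the tie-broken preference `P_{i,≻}`: `a` above `b` iff
`a P b`, or `a I b` and the owner of `a` comes before the owner of `b` in `≻_i`. -/
def tieBroken (w : Fin n ≃ H) (R : WeakOrder H) (lt : Fin n → Fin n → Prop) (a b : H) : Prop :=
  R.P a b ∨ (R.I a b ∧ lt (w.symm a) (w.symm b))

/-- The weak tie-broken relation `R_{i,≻}` (reflexive closure of the strict part). -/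
def tieBrokenWeak (w : Fin n ≃ H) (R : WeakOrder H) (lt : Fin n → Fin n → Prop)
    (a b : H) : Prop :=
  a = b ∨ tieBroken w R lt a b

/-- The owner (in `S`) of the `pref`-best house among the endowments of the
remaining agents `S`; the agent with this endowment is whom `i` points at. -/
noncomputable def point (w : Fin n ≃ H) (pref : H → H → Prop) (S : Finset (Fin n))
    (i : Fin n) : Fin n :=
  if h : (S.filter fun m => ∀ j ∈ S, j = m ∨ pref (w m) (w j)).Nonempty then
    (S.filter fun m => ∀ j ∈ S, j = m ∨ pref (w m) (w j)).min' h
  else i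

/-- The agents of `S` lying on some trading cycle of the pointing map. -/
noncomputable def cycleAgents (w : Fin n ≃ H) (pref : Fin n → H → H → Prop)
    (S : Finset (Fin n)) : Finset (Fin n) :=
  S.filter fun i => ∃ k, 0 < k ∧ (fun j => point w (pref j) S j)^[k] i = i

/-- Top trading cycles on strict preferences, fuel-based recursion: in each round all
current trading cycles are executed and their agents removed. -/
noncomputable def TTCaux (w : Fin n ≃ H) (pref : Fin n → H → H → Prop) :
    ℕ → Finset (Fin n) → Fin n → H
  | 0, _, i => w i
  | fuel + 1, S, i =>
      if i ∈ cycleAgents w pref S then w (point w (pref i) S i)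
      else TTCaux w pref fuel (S \ cycleAgents w pref S) i

/-- Gale's top trading cycles algorithm for a strict preference profile. -/
noncomputable def TTCstrict (w : Fin n ≃ H) (pref : Fin n → H → H → Prop) : Fin n → H :=
  TTCaux w pref n Finset.univ

/-- Round (executed-cycle index, starting from 1) at which an agent is assigned. -/
noncomputable def TTCroundAux (w : Fin n ≃ H) (pref : Fin n → H → H → Prop) :
    ℕ → Finset (Fin n) → Fin n → ℕ
  | 0, _, _ => 1
  | fuel + 1, S, i =>
      if i ∈ cycleAgents w pref S then 1
      else TTCroundAux w pref fuel (S \ cycleAgents w pref S) i + 1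

/-- TTC with fixed tie-breaking: `TTC_≻(R) = TTC(R_≻)`. -/
noncomputable def TTCtb (w : Fin n ≃ H) (R : Fin n → WeakOrder H)
    (tb : Fin n → Fin n → Fin n → Prop) : Fin n → H :=
  TTCstrict w fun i => tieBroken w (R i) (tb i)

/-- The round in which agent `i` is assigned under `TTC_≻(R)`. -/
noncomputable def TTCtbRound (w : Fin n ≃ H) (R : Fin n → WeakOrder H)
    (tb : Fin n → Fin n → Fin n → Prop) (i : Fin n) : ℕ :=
  TTCroundAux w (fun a => tieBroken w (R a) (tb a)) n Finset.univ i

/-- Objective indifferences w.r.t. the partition of `H` into the fibers of `blk`: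
indifference holds exactly between houses in the same block. -/
def ObjInd (blk : H → B) (R : WeakOrder H) : Prop :=
  ∀ a b, R.I a b ↔ blk a = blk b

/-- `x` is blocked: some coalition `Q` can reallocate its own endowments making
all its members weakly better off and one strictly better off. -/
def Blocks (w : Fin n ≃ H) (R : Fin n → WeakOrder H) (x : Fin n → H) : Prop :=
  ∃ (Q : Finset (Fin n)) (y : Fin n ≃ H),
    Q.image (⇑y) = Q.image (⇑w) ∧
    (∀ i ∈ Q, (R i).rel (y i) (x i)) ∧
    ∃ i ∈ Q, (R i).P (y i) (x i)

/-- `x` is weakly blocked: some nonempty coalition can reallocate its own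
endowments making all of its members strictly better off. -/
def WeaklyBlocks (w : Fin n ≃ H) (R : Fin n → WeakOrder H) (x : Fin n → H) : Prop :=
  ∃ Q : Finset (Fin n), Q.Nonempty ∧ ∃ y : Fin n ≃ H,
    Q.image (⇑y) = Q.image (⇑w) ∧ ∀ i ∈ Q, (R i).P (y i) (x i)

/-- `y` Pareto dominates `x`. -/
def ParetoDom (R : Fin n → WeakOrder H) (y x : Fin n → H) : Prop :=
  (∀ i, (R i).rel (y i) (x i)) ∧ ∃ i, (R i).P (y i) (x i)

end Defs

/-!
Give `R_α` to the agents whose endowment is `α`-weakly above `h₂`, except the owner of `h₂`, and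
`R_β` to everybody else; all agents break ties by index, except that the owner of `h₂` comes last.
The first group then ranks its own houses above all others, so its members always point into the
group, while everybody else points at one common agent. Such a pointing map has no cycle of length
two or more, so `TTC_≻` trades nothing. Yet the owners of `h₁` (a member of the first group) and of
`h₂` can swap houses: the first is indifferent and the second strictly gains.
-/

theorem _root_.Function.IsPeriodicPt.isFixedPt_of_iterate_three {α : Type*} {f : α → α} {k : ℕ} {x : α}
    (hx : Function.IsPeriodicPt f k x) (hk : 0 < k) (hf : ∀ y, f (f (f y)) = f (f y)) :
    Function.IsFixedPt f x := by
  have hstable : ∀ m y, f^[m + 2] y = f (f y) := by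
    intro m y
    induction m with
    | zero => rfl
    | succ m ih => rw [Function.iterate_succ_apply', ih, hf]
  have hx2 : f (f x) = x := by
    have := hx.mul_const 2
    rwa [Function.IsPeriodicPt, Function.IsFixedPt, show k * 2 = (2 * k - 2) + 2 by omega,
      hstable] at this
  change f x = x
  rw [← hx2, hf, hx2]

section TopTradingCycles

variable {n : ℕ} {H : Type*}

theorem WeakOrder.rel_refl (R : WeakOrder H) (a : H) : R.rel a a :=
  (R.total a a).elim id id

theorem isStrictTotalOrder_tieBroken (w : Fin n ≃ H) (R : WeakOrder H)
    {lt : Fin n → Fin n → Prop} (hlt : IsTieBreak lt) :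
    IsStrictTotalOrder H (tieBroken w R lt) where
  trichotomous a b hab hba := by
    by_contra hne
    have hI : R.I a b := by
      by_contra hI
      rcases R.total a b with h | h
      exacts [hab (Or.inl ⟨h, fun h' => hI ⟨h, h'⟩⟩), hba (Or.inl ⟨h, fun h' => hI ⟨h', h⟩⟩)]
    rcases hlt.1 (w.symm a) (w.symm b) (w.symm.injective.ne hne) with h | h
    exacts [hab (Or.inr ⟨hI, h⟩), hba (Or.inr ⟨⟨hI.2, hI.1⟩, h⟩)]
  irrefl a := by
    rintro (h | h)
    exacts [h.2 h.1, hlt.2.2 _ h.2]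
  trans a b c := by
    rintro (h | h) (h' | h')
    · exact Or.inl ⟨R.trans _ _ _ h.1 h'.1, fun hc => h.2 (R.trans _ _ _ h'.1 hc)⟩
    · exact Or.inl ⟨R.trans _ _ _ h.1 h'.1.1, fun hc => h.2 (R.trans _ _ _ h'.1.1 hc)⟩
    · exact Or.inl ⟨R.trans _ _ _ h.1.1 h'.1, fun hc => h'.2 (R.trans _ _ _ hc h.1.1)⟩
    · exact Or.inr ⟨⟨R.trans _ _ _ h.1.1 h'.1.1, R.trans _ _ _ h'.1.2 h.1.2⟩, hlt.2.1 h.2 h'.2⟩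

theorem exists_best_owner (w : Fin n ≃ H) (p : H → H → Prop) [IsStrictTotalOrder H p]
    {S : Finset (Fin n)} (hS : S.Nonempty) : ∃ m ∈ S, ∀ l ∈ S, l = m ∨ p (w m) (w l) := by
  let : LinearOrder H := linearOrderOfSTO p
  obtain ⟨m, hm, hmin⟩ := S.exists_min_image w hS
  exact ⟨m, hm, fun l hl => (hmin l hl).imp (fun h => w.injective h.symm) id⟩

theorem point_eq_of_best (w : Fin n ≃ H) {p : H → H → Prop} [Std.Asymm p] {S : Finset (Fin n)}
    {m : Fin n} (hm : m ∈ S) (hbest : ∀ l ∈ S, l = m ∨ p (w m) (w l)) (i : Fin n) :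
    point w p S i = m := by
  have hne : (S.filter fun m' => ∀ j ∈ S, j = m' ∨ p (w m') (w j)).Nonempty :=
    ⟨m, Finset.mem_filter.mpr ⟨hm, hbest⟩⟩
  rw [point, dif_pos hne]
  obtain ⟨hm'S, hbest'⟩ := Finset.mem_filter.mp (Finset.min'_mem _ hne)
  rcases hbest _ hm'S with h | h
  · exact h
  · exact (hbest' m hm).elim Eq.symm fun h' => absurd h' (asymm_of p h)

theorem TTCaux_eq_self_of_point_eq_self (w : Fin n ≃ H) (pref : Fin n → H → H → Prop)
    (hfix : ∀ S, ∀ i ∈ cycleAgents w pref S, point w (pref i) S i = i) :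
    ∀ fuel S i, TTCaux w pref fuel S i = w i
  | 0, _, _ => rfl
  | fuel + 1, S, i => by
    rw [TTCaux]
    split_ifs with hi
    · rw [hfix S i hi]
    · exact TTCaux_eq_self_of_point_eq_self w pref hfix fuel _ i

theorem TTCstrict_eq_self_of_two_types (w : Fin n ≃ H) (A : Fin n → Prop)
    {p q : H → H → Prop} [IsStrictTotalOrder H p] [IsStrictTotalOrder H q]
    {pref : Fin n → H → H → Prop} (hp : ∀ i, A i → pref i = p) (hq : ∀ i, ¬ A i → pref i = q)
    (hA : ∀ i j, A i → ¬ A j → p (w i) (w j)) :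
    TTCstrict w pref = w := by
  refine funext (TTCaux_eq_self_of_point_eq_self w pref (fun S i hi => ?_) n Finset.univ)
  obtain ⟨hiS, k, hk, hik⟩ := Finset.mem_filter.mp hi
  obtain ⟨ma, hmaS, hma⟩ := exists_best_owner w p ⟨i, hiS⟩
  obtain ⟨mb, hmbS, hmb⟩ := exists_best_owner w q ⟨i, hiS⟩
  set f : Fin n → Fin n := fun j => point w (pref j) S j
  have hfA : ∀ j, A j → f j = ma := fun j hj => by
    simp only [f, hp j hj]; exact point_eq_of_best w hmaS hma j
  have hfB : ∀ j, ¬ A j → f j = mb := fun j hj => by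
    simp only [f, hq j hj]; exact point_eq_of_best w hmbS hmb j
  have hmb_ma : A mb → A ma := fun hAmb => by
    by_contra hAma
    rcases hma mb hmbS with rfl | h
    exacts [hAma hAmb, asymm_of p h (hA mb ma hAmb hAma)]
  -- `f` takes only the values `ma` and `mb`, and `ma ↦ mb ↦ ma` would contradict `hmb_ma`
  have hf3 : ∀ j, f (f (f j)) = f (f j) := by
    intro j
    by_cases hj : A j <;> by_cases ha : A ma <;> by_cases hb : A mb <;> simp_all
  exact Function.IsPeriodicPt.isFixedPt_of_iterate_three (f := f) hik hk hf3

def lastTieBreak (k a b : Fin n) : Prop :=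
  (if a = k then n else (a : ℕ)) < (if b = k then n else (b : ℕ))

theorem isTieBreak_lastTieBreak (k : Fin n) : IsTieBreak (lastTieBreak k) := by
  refine ⟨fun a b hab => lt_or_gt_of_ne ?_, fun _ _ _ => lt_trans, fun _ => lt_irrefl _⟩
  have := a.isLt; have := b.isLt
  split_ifs <;> grind

theorem lastTieBreak_of_ne {k a : Fin n} (h : a ≠ k) : lastTieBreak k a k := by
  simp [lastTieBreak, h]

theorem tieBroken_lastTieBreak_of_rel (w : Fin n ≃ H) (R : WeakOrder H) {h a b : H}
    (ha : R.rel a h) (ha_ne : a ≠ h) (hb : ¬ (R.rel b h ∧ b ≠ h)) :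
    tieBroken w R (lastTieBreak (w.symm h)) a b := by
  by_cases hbh : b = h
  · subst hbh
    by_cases hba : R.rel b a
    · exact Or.inr ⟨⟨ha, hba⟩, lastTieBreak_of_ne (w.symm.injective.ne ha_ne)⟩
    · exact Or.inl ⟨ha, hba⟩
  · have hb' : ¬ R.rel b h := fun h' => hb ⟨h', hbh⟩
    exact Or.inl ⟨R.trans _ _ _ ha ((R.total _ _).resolve_left hb'),
      fun h' => hb' (R.trans _ _ _ h' ha)⟩

theorem paretoDom_trans_swap (R : Fin n → WeakOrder H) (w : Fin n ≃ H) {h₁ h₂ : H}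
    (h₁_rel : (R (w.symm h₁)).rel h₂ h₁) (h₂_P : (R (w.symm h₂)).P h₁ h₂) :
    ParetoDom R (w.trans (Equiv.swap h₁ h₂)) w := by
  refine ⟨fun i => ?_, w.symm h₂, by simpa using h₂_P⟩
  simp only [Equiv.trans_apply]
  by_cases hi₁ : w i = h₁
  · rw [← w.eq_symm_apply] at hi₁
    subst hi₁
    simpa using h₁_rel
  by_cases hi₂ : w i = h₂
  · rw [← w.eq_symm_apply] at hi₂
    subst hi₂
    simpa using h₂_P.1
  rw [Equiv.swap_apply_of_ne_of_ne hi₁ hi₂]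
  exact (R i).rel_refl _

end TopTradingCycles

theorem TTCtb_not_paretoEfficient_beyond_objInd_general {n : ℕ} {H : Type*}
    (w : Fin n ≃ H) (𝓡 : Set (WeakOrder H)) (Rα Rβ : WeakOrder H)
    (hα : Rα ∈ 𝓡) (hβ : Rβ ∈ 𝓡) (h1 h2 : H) (hI : Rα.I h1 h2) (hP : Rβ.P h1 h2) :
    ∃ R : Fin n → WeakOrder H, (∀ i, R i ∈ 𝓡) ∧
      ∃ tb : Fin n → Fin n → Fin n → Prop, (∀ i, IsTieBreak (tb i)) ∧
        ∃ y : Fin n ≃ H, ParetoDom R (⇑y) (TTCtb w R tb) := by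
  have hne : h1 ≠ h2 := fun h => hP.2 (h ▸ hP.1)
  let A : Fin n → Prop := fun i => Rα.rel (w i) h2 ∧ w i ≠ h2
  let R : Fin n → WeakOrder H := fun i => if A i then Rα else Rβ
  let lt := lastTieBreak (w.symm h2)
  have hTB : IsTieBreak lt := isTieBreak_lastTieBreak _
  have := isStrictTotalOrder_tieBroken w Rα hTB
  have := isStrictTotalOrder_tieBroken w Rβ hTB
  have hTTC : TTCtb w R (fun _ => lt) = w :=
    TTCstrict_eq_self_of_two_types w A (p := tieBroken w Rα lt) (q := tieBroken w Rβ lt)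
      (fun i hi => by simp [R, hi]) (fun i hi => by simp [R, hi])
      fun i j hi hj => tieBroken_lastTieBreak_of_rel w Rα hi.1 hi.2 hj
  refine ⟨R, fun i => ?_, _, fun _ => hTB, w.trans (Equiv.swap h1 h2), ?_⟩
  · by_cases hi : A i <;> simp [R, hi, hα, hβ]
  rw [hTTC]
  have hA1 : A (w.symm h1) := by simpa [A] using ⟨hI.1, hne⟩
  have hA2 : ¬ A (w.symm h2) := by simp [A]
  exact paretoDom_trans_swap R w (by simpa [R, hA1] using hI.2) (by simpa [R, hA2] using hP)

/-- if a domain `𝓡` is not contained in any objective indifferences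
domain (it contains `R_α, R_β` with `h₁ I_α h₂` but `h₁ P_β h₂`), then there are a
profile from `𝓡` and a tie-breaking profile for which `TTC_≻(R)` is Pareto
dominated; so objective indifferences domains are the maximal domains on which all
`TTC_≻` mechanisms are Pareto efficient. -/
theorem TTCtb_not_paretoEfficient_beyond_objInd {n : ℕ} {H : Type*} (hn : 2 ≤ n)
    (w : Fin n ≃ H) (𝓡 : Set (WeakOrder H)) (Rα Rβ : WeakOrder H)
    (hα : Rα ∈ 𝓡) (hβ : Rβ ∈ 𝓡) (h1 h2 : H) (hI : Rα.I h1 h2) (hP : Rβ.P h1 h2) :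
    ∃ R : Fin n → WeakOrder H, (∀ i, R i ∈ 𝓡) ∧
      ∃ tb : Fin n → Fin n → Fin n → Prop, (∀ i, IsTieBreak (tb i)) ∧
        ∃ y : Fin n ≃ H, ParetoDom R (⇑y) (TTCtb w R tb) :=
  TTCtb_not_paretoEfficient_beyond_objInd_general w 𝓡 Rα Rβ hα hβ h1 h2 hI hP

end ShapleyScarf
end

section
/- Let ≻ be a tie-breaking profile and let R, R' be any two profiles; set x = TTC_≻(R) and y = TTC_≻(R'). If there exists an agent i with y_i P_{i,≻} x_i, then there exists an agent j and a house h such that x_j P_{j,≻} h and h P'_{j,≻} x_j. (To make some agent strictly better off under the tie-broken preferences, some agent must have reported a ranking placing a worse house above his original assignment.) -/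
open scoped Classical

namespace ShapleyScarf

section KeyLemma
variable {n : ℕ} {H : Type*} (w : Fin n ≃ H)

/-- A strict linear order (trichotomous, transitive, irreflexive). -/
def IsSLO (p : H → H → Prop) : Prop :=
  (∀ a b, a = b ∨ p a b ∨ p b a) ∧ (∀ a b c, p a b → p b c → p a c) ∧ ∀ a, ¬ p a a

theorem isSLO_tieBroken {R : WeakOrder H} {lt : Fin n → Fin n → Prop}
    (h : IsTieBreak lt) : IsSLO (tieBroken w R lt) := by
  obtain ⟨hto, htr, hirr⟩ := h
  refine ⟨?_, ?_, ?_⟩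
  · intro a b
    by_cases hab : a = b
    · exact Or.inl hab
    have hwab : w.symm a ≠ w.symm b := fun he => hab (by simpa using congrArg w he)
    rcases R.total a b with h1 | h1
    · by_cases h2 : R.rel b a
      · rcases hto _ _ hwab with h3 | h3
        · exact Or.inr (Or.inl (Or.inr ⟨⟨h1, h2⟩, h3⟩))
        · exact Or.inr (Or.inr (Or.inr ⟨⟨h2, h1⟩, h3⟩))
      · exact Or.inr (Or.inl (Or.inl ⟨h1, h2⟩))
    · by_cases h2 : R.rel a b
      · rcases hto _ _ hwab with h3 | h3
        · exact Or.inr (Or.inl (Or.inr ⟨⟨h2, h1⟩, h3⟩))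
        · exact Or.inr (Or.inr (Or.inr ⟨⟨h1, h2⟩, h3⟩))
      · exact Or.inr (Or.inr (Or.inl ⟨h1, h2⟩))
  · rintro a b c (⟨hab, hnba⟩ | ⟨⟨hab, hba⟩, hlab⟩) (⟨hbc, hncb⟩ | ⟨⟨hbc, hcb⟩, hlbc⟩)
    · exact Or.inl ⟨R.trans _ _ _ hab hbc, fun hca => hnba (R.trans _ _ _ hbc hca)⟩
    · exact Or.inl ⟨R.trans _ _ _ hab hbc, fun hca => hnba (R.trans _ _ _ hbc hca)⟩
    · exact Or.inl ⟨R.trans _ _ _ hab hbc, fun hca => hncb (R.trans _ _ _ hca hab)⟩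
    · exact Or.inr ⟨⟨R.trans _ _ _ hab hbc, R.trans _ _ _ hcb hba⟩, htr hlab hlbc⟩
  · rintro a (⟨h1, h2⟩ | ⟨_, h2⟩)
    · exact h2 h1
    · exact hirr _ h2

theorem exists_best {p : H → H → Prop} (hp : IsSLO p) :
    ∀ S : Finset (Fin n), S.Nonempty → ∃ m ∈ S, ∀ j ∈ S, j = m ∨ p (w m) (w j) := by
  intro S
  induction S using Finset.induction_on with
  | empty => intro h; exact absurd h (by simp)
  | @insert a S ha ih =>
    intro _
    rcases S.eq_empty_or_nonempty with rfl | hS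
    · refine ⟨a, Finset.mem_insert_self _ _, fun j hj => Or.inl ?_⟩
      simpa using hj
    · obtain ⟨m, hm, hbest⟩ := ih hS
      rcases hp.1 (w a) (w m) with he | hpa | hpm
      · have : a = m := w.injective he
        subst this
        refine ⟨a, Finset.mem_insert_self _ _, fun j hj => ?_⟩
        rcases Finset.mem_insert.1 hj with rfl | hj
        · exact Or.inl rfl
        · exact hbest j hj
      · refine ⟨a, Finset.mem_insert_self _ _, fun j hj => ?_⟩
        rcases Finset.mem_insert.1 hj with rfl | hj
        · exact Or.inl rfl
        · rcases hbest j hj with rfl | hpj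
          · exact Or.inr hpa
          · exact Or.inr (hp.2.1 _ _ _ hpa hpj)
      · refine ⟨m, Finset.mem_insert_of_mem hm, fun j hj => ?_⟩
        rcases Finset.mem_insert.1 hj with rfl | hj
        · exact Or.inr hpm
        · exact hbest j hj

theorem point_spec {p : H → H → Prop} (hp : IsSLO p) {S : Finset (Fin n)}
    (hS : S.Nonempty) (i : Fin n) :
    point w p S i ∈ S ∧ ∀ j ∈ S, j = point w p S i ∨ p (w (point w p S i)) (w j) := by
  obtain ⟨m, hm, hbest⟩ := exists_best w hp S hS
  have hne : (S.filter fun m => ∀ j ∈ S, j = m ∨ p (w m) (w j)).Nonempty :=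
    ⟨m, Finset.mem_filter.2 ⟨hm, hbest⟩⟩
  unfold point
  rw [dif_pos hne]
  have h' := Finset.mem_filter.1 (Finset.min'_mem _ hne)
  exact ⟨h'.1, h'.2⟩

theorem mem_cycleAgents {pref : Fin n → H → H → Prop} {S : Finset (Fin n)} {i : Fin n} :
    i ∈ cycleAgents w pref S ↔
      i ∈ S ∧ ∃ k, 0 < k ∧ (fun j => point w (pref j) S j)^[k] i = i := by
  unfold cycleAgents
  exact Finset.mem_filter

variable (pref : Fin n → H → H → Prop)

theorem point_mem (hpref : ∀ i, IsSLO (pref i)) {S : Finset (Fin n)} (hS : S.Nonempty)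
    (j : Fin n) : point w (pref j) S j ∈ S :=
  (point_spec w (hpref j) hS j).1

theorem cycle_g (hpref : ∀ i, IsSLO (pref i)) {S : Finset (Fin n)} {i : Fin n}
    (hi : i ∈ cycleAgents w pref S) :
    point w (pref i) S i ∈ cycleAgents w pref S := by
  obtain ⟨hiS, k, hk, hfix⟩ := (mem_cycleAgents w).1 hi
  have hS : S.Nonempty := ⟨i, hiS⟩
  refine (mem_cycleAgents w).2 ⟨point_mem w pref hpref hS i, k, hk, ?_⟩
  show (fun j => point w (pref j) S j)^[k] ((fun j => point w (pref j) S j) i) = _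
  rw [← Function.iterate_succ_apply, Function.iterate_succ_apply', hfix]

theorem cycle_nonempty (hpref : ∀ i, IsSLO (pref i)) {S : Finset (Fin n)}
    (hS : S.Nonempty) : (cycleAgents w pref S).Nonempty := by
  obtain ⟨i, hi⟩ := hS
  set g : Fin n → Fin n := fun j => point w (pref j) S j with hg
  have hmem : ∀ t, g^[t] i ∈ S := by
    intro t
    induction t with
    | zero => exact hi
    | succ t ih =>
      rw [Function.iterate_succ_apply']
      exact point_mem w pref hpref ⟨i, hi⟩ _
  obtain ⟨a, b, hab, he⟩ := Finite.exists_ne_map_eq_of_infinite (fun t : ℕ => g^[t] i)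
  rcases hab.lt_or_gt with hlt | hlt
  all_goals {
    first
    | (refine ⟨g^[a] i, (mem_cycleAgents w).2 ⟨hmem a, b - a, by omega, ?_⟩⟩
       show g^[b-a] (g^[a] i) = g^[a] i
       rw [← Function.iterate_add_apply, Nat.sub_add_cancel hlt.le]
       exact he.symm)
    | (refine ⟨g^[b] i, (mem_cycleAgents w).2 ⟨hmem b, a - b, by omega, ?_⟩⟩
       show g^[a-b] (g^[b] i) = g^[b] i
       rw [← Function.iterate_add_apply, Nat.sub_add_cancel hlt.le]
       exact he)
  }

theorem cycle_inj {S : Finset (Fin n)} {i j : Fin n}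
    (hi : i ∈ cycleAgents w pref S) (hj : j ∈ cycleAgents w pref S)
    (hij : point w (pref i) S i = point w (pref j) S j) : i = j := by
  obtain ⟨hiS, ki, hki, hfi⟩ := (mem_cycleAgents w).1 hi
  obtain ⟨hjS, kj, hkj, hfj⟩ := (mem_cycleAgents w).1 hj
  set g : Fin n → Fin n := fun j => point w (pref j) S j with hg
  obtain ⟨k1, rfl⟩ : ∃ k', ki = k' + 1 := ⟨ki - 1, by omega⟩
  obtain ⟨k2, rfl⟩ : ∃ k', kj = k' + 1 := ⟨kj - 1, by omega⟩
  have hgi : g i = g j := hij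
  have hmi : g^[k1 + 1] (g i) = g i := by
    rw [← Function.iterate_succ_apply, Function.iterate_succ_apply', hfi]
  have hmj : g^[k2 + 1] (g i) = g i := by
    rw [hgi, ← Function.iterate_succ_apply, Function.iterate_succ_apply', hfj]
  have h1 : i = g^[k1] (g i) := by
    conv_lhs => rw [← hfi, Function.iterate_succ_apply]
  have h2 : j = g^[k2] (g i) := by
    conv_lhs => rw [← hfj, Function.iterate_succ_apply, ← hgi]
  have e1 : i = g^[k1 + (k2 + 1)] (g i) := by
    rw [Function.iterate_add_apply, hmj]
    exact h1
  have e2 : j = g^[k2 + (k1 + 1)] (g i) := by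
    rw [Function.iterate_add_apply, hmi]
    exact h2
  have e3 : k1 + (k2 + 1) = k2 + (k1 + 1) := by omega
  rw [e1, e3, ← e2]

theorem cycle_image (hpref : ∀ i, IsSLO (pref i)) (S : Finset (Fin n)) :
    (cycleAgents w pref S).image (fun j => point w (pref j) S j) = cycleAgents w pref S := by
  apply Finset.eq_of_subset_of_card_le
  · intro x hx
    obtain ⟨j, hj, rfl⟩ := Finset.mem_image.1 hx
    exact cycle_g w pref hpref hj
  · rw [Finset.card_image_of_injOn]
    intro a ha b hb hab
    exact cycle_inj w pref ha hb hab

/-- The set of remaining agents after `t` rounds. -/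
noncomputable def Sseq (t : ℕ) : Finset (Fin n) :=
  (fun S => S \ cycleAgents w pref S)^[t] Finset.univ

theorem Sseq_zero : Sseq w pref 0 = Finset.univ := rfl

theorem Sseq_succ (t : ℕ) :
    Sseq w pref (t + 1) = Sseq w pref t \ cycleAgents w pref (Sseq w pref t) :=
  Function.iterate_succ_apply' _ _ _

theorem Sseq_mono {s t : ℕ} (hst : s ≤ t) : Sseq w pref t ⊆ Sseq w pref s := by
  induction t with
  | zero =>
    obtain rfl : s = 0 := Nat.le_zero.1 hst
    exact subset_rfl
  | succ t ih =>
    rcases eq_or_lt_of_le hst with rfl | hlt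
    · exact subset_rfl
    · have h1 : Sseq w pref (t + 1) ⊆ Sseq w pref t := by
        rw [Sseq_succ]
        exact Finset.sdiff_subset
      exact h1.trans (ih (Nat.lt_succ_iff.1 hlt))

theorem Sseq_card (hpref : ∀ i, IsSLO (pref i)) :
    ∀ t, (Sseq w pref t).Nonempty → (Sseq w pref t).card + t ≤ n := by
  intro t
  induction t with
  | zero =>
    intro _
    rw [Sseq_zero]
    simp
  | succ t ih =>
    intro hne
    have hS : (Sseq w pref t).Nonempty :=
      hne.mono (Sseq_mono w pref (Nat.le_succ t))
    have h1 := ih hS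
    have hc : (Sseq w pref (t + 1)).card < (Sseq w pref t).card := by
      rw [Sseq_succ]
      exact Finset.card_lt_card
        (Finset.sdiff_ssubset (Finset.filter_subset _ _) (cycle_nonempty w pref hpref hS))
    omega

/-- Round at which agent `i` is removed. -/
noncomputable def rnd (i : Fin n) : ℕ := sInf {t | i ∉ Sseq w pref (t + 1)}

theorem rnd_exists (hpref : ∀ i, IsSLO (pref i)) (i : Fin n) :
    {t | i ∉ Sseq w pref (t + 1)}.Nonempty := by
  refine ⟨n - 1, fun hmem => ?_⟩
  rw [Nat.sub_add_cancel i.pos] at hmem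
  have h1 := Sseq_card w pref hpref n ⟨i, hmem⟩
  have h2 : 1 ≤ (Sseq w pref n).card := Finset.card_pos.2 ⟨i, hmem⟩
  omega

theorem rnd_not_mem (hpref : ∀ i, IsSLO (pref i)) (i : Fin n) :
    i ∉ Sseq w pref (rnd w pref i + 1) :=
  Nat.sInf_mem (rnd_exists w pref hpref i)

theorem rnd_mem (hpref : ∀ i, IsSLO (pref i)) (i : Fin n) :
    i ∈ Sseq w pref (rnd w pref i) := by
  rcases Nat.eq_zero_or_pos (rnd w pref i) with h | h
  · rw [h, Sseq_zero]; exact Finset.mem_univ i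
  · obtain ⟨s, hs⟩ : ∃ s, rnd w pref i = s + 1 := ⟨rnd w pref i - 1, by omega⟩
    rw [hs]
    by_contra hcon
    have h2 : rnd w pref i ≤ s := Nat.sInf_le hcon
    omega

theorem rnd_cycle (hpref : ∀ i, IsSLO (pref i)) (i : Fin n) :
    i ∈ cycleAgents w pref (Sseq w pref (rnd w pref i)) := by
  have h1 := rnd_mem w pref hpref i
  have h2 := rnd_not_mem w pref hpref i
  rw [Sseq_succ, Finset.mem_sdiff] at h2
  by_contra hcon
  exact h2 ⟨h1, hcon⟩

theorem mem_Sseq_iff (hpref : ∀ i, IsSLO (pref i)) {i : Fin n} {t : ℕ} :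
    i ∈ Sseq w pref t ↔ t ≤ rnd w pref i := by
  constructor
  · intro hmem
    by_contra hcon
    have h1 : rnd w pref i + 1 ≤ t := by omega
    exact rnd_not_mem w pref hpref i (Sseq_mono w pref h1 hmem)
  · intro hle
    exact Sseq_mono w pref hle (rnd_mem w pref hpref i)

theorem rnd_eq_of_cycle (hpref : ∀ i, IsSLO (pref i)) {j : Fin n} {t : ℕ}
    (hj : j ∈ cycleAgents w pref (Sseq w pref t)) : rnd w pref j = t := by
  have h1 : t ≤ rnd w pref j :=
    (mem_Sseq_iff w pref hpref).1 ((Finset.filter_subset _ _) hj)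
  have h2 : j ∉ Sseq w pref (t + 1) := by
    rw [Sseq_succ, Finset.mem_sdiff]
    exact fun hc => hc.2 hj
  have h3 : ¬ (t + 1 ≤ rnd w pref j) := fun hc => h2 ((mem_Sseq_iff w pref hpref).2 hc)
  omega

theorem rnd_lt (hpref : ∀ i, IsSLO (pref i)) (i : Fin n) : rnd w pref i < n := by
  have h1 := rnd_mem w pref hpref i
  have h2 := Sseq_card w pref hpref (rnd w pref i) ⟨i, h1⟩
  have h3 : 1 ≤ (Sseq w pref (rnd w pref i)).card := Finset.card_pos.2 ⟨i, h1⟩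
  omega

theorem TTCaux_eval :
    ∀ (t fuel : ℕ) (S : Finset (Fin n)) (i : Fin n), t < fuel →
      (∀ s < t, i ∉ cycleAgents w pref ((fun S => S \ cycleAgents w pref S)^[s] S)) →
      i ∈ cycleAgents w pref ((fun S => S \ cycleAgents w pref S)^[t] S) →
      TTCaux w pref fuel S i =
        w (point w (pref i) ((fun S => S \ cycleAgents w pref S)^[t] S) i) := by
  intro t
  induction t with
  | zero =>
    intro fuel S i hf h0 hmem
    obtain ⟨fuel, rfl⟩ : ∃ f', fuel = f' + 1 := ⟨fuel - 1, by omega⟩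
    simp only [Function.iterate_zero_apply] at hmem ⊢
    simp only [TTCaux]
    rw [if_pos hmem]
  | succ t ih =>
    intro fuel S i hf hmin hmem
    obtain ⟨fuel, rfl⟩ : ∃ f', fuel = f' + 1 := ⟨fuel - 1, by omega⟩
    have h0 : i ∉ cycleAgents w pref S := by
      have := hmin 0 (Nat.succ_pos t)
      simpa using this
    simp only [TTCaux]
    rw [if_neg h0]
    rw [Function.iterate_succ_apply] at hmem
    have hres := ih fuel (S \ cycleAgents w pref S) i (by omega)
      (fun s hs => by
        have hh := hmin (s + 1) (by omega)
        rw [Function.iterate_succ_apply] at hh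
        exact hh)
      hmem
    rw [Function.iterate_succ_apply]
    exact hres

theorem TTCstrict_eval (hpref : ∀ i, IsSLO (pref i)) (i : Fin n) :
    TTCstrict w pref i = w (point w (pref i) (Sseq w pref (rnd w pref i)) i) := by
  have := TTCaux_eval w pref (rnd w pref i) n Finset.univ i (rnd_lt w pref hpref i)
    (fun s hs hc => by
      have h1 : i ∈ Sseq w pref (s + 1) :=
        (mem_Sseq_iff w pref hpref).2 (by omega)
      rw [Sseq_succ, Finset.mem_sdiff] at h1
      exact h1.2 hc)
    (rnd_cycle w pref hpref i)
  exact this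

/-- The key transfer lemma: if no agent ranks (under `pref'`) a house above his
`TTC(pref)` assignment that is below it under `pref`, then the outcomes coincide. -/
theorem TTC_eq_of_star (pref' : Fin n → H → H → Prop)
    (hpref : ∀ i, IsSLO (pref i)) (hpref' : ∀ i, IsSLO (pref' i))
    (star : ∀ i h, pref' i h (TTCstrict w pref i) → pref i h (TTCstrict w pref i)) :
    TTCstrict w pref' = TTCstrict w pref := by
  set x : Fin n → H := TTCstrict w pref with hxdef
  set r : Fin n → ℕ := rnd w pref with hrdef
  have hx : ∀ i, x i = w (point w (pref i) (Sseq w pref (r i)) i) :=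
    fun i => TTCstrict_eval w pref hpref i
  have hxc : ∀ i, w.symm (x i) ∈ cycleAgents w pref (Sseq w pref (r i)) := by
    intro i
    rw [hx i, Equiv.symm_apply_apply]
    exact cycle_g w pref hpref (rnd_cycle w pref hpref i)
  have hrpt : ∀ i, r (w.symm (x i)) = r i :=
    fun i => rnd_eq_of_cycle w pref hpref (hxc i)
  have hr_better : ∀ i j, pref i (w j) (x i) → r j < r i := by
    intro i j hbet
    have hSne : (Sseq w pref (r i)).Nonempty := ⟨i, rnd_mem w pref hpref i⟩
    by_contra hcon
    have hjmem : j ∈ Sseq w pref (r i) :=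
      (mem_Sseq_iff w pref hpref).2 (show r i ≤ r j by omega)
    rcases (point_spec w (hpref i) hSne i).2 j hjmem with he | hp
    · rw [he, ← hx i] at hbet
      exact (hpref i).2.2 _ hbet
    · rw [← hx i] at hp
      exact (hpref i).2.2 _ ((hpref i).2.1 _ _ _ hbet hp)
  have hxinj : Function.Injective x := by
    intro a b hab
    have h2 : r a = r b := by rw [← hrpt a, hab, hrpt b]
    have hca : a ∈ cycleAgents w pref (Sseq w pref (r a)) := rnd_cycle w pref hpref a
    have hcb : b ∈ cycleAgents w pref (Sseq w pref (r a)) := by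
      rw [h2]
      exact rnd_cycle w pref hpref b
    refine cycle_inj w pref hca hcb ?_
    apply w.injective
    rw [← hx a, h2, ← hx b]
    exact hab
  -- the claim: given the invariant, every executed cycle under pref' gives x
  have claim : ∀ t, (∀ i ∈ Sseq w pref' t, w.symm (x i) ∈ Sseq w pref' t) →
      ∀ i ∈ cycleAgents w pref' (Sseq w pref' t),
        w (point w (pref' i) (Sseq w pref' t) i) = x i := by
    intro t hInv i hi
    obtain ⟨hiS, k, hk, hfix⟩ := (mem_cycleAgents w).1 hi
    have hSne : (Sseq w pref' t).Nonempty := ⟨i, hiS⟩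
    set g : Fin n → Fin n := fun j => point w (pref' j) (Sseq w pref' t) j with hg
    have stepA : ∀ j ∈ Sseq w pref' t, r (g j) < r j ∨ w (g j) = x j := by
      intro j hj
      have hxj : w.symm (x j) ∈ Sseq w pref' t := hInv j hj
      rcases (point_spec w (hpref' j) hSne j).2 _ hxj with he | hbet
      · right
        have hgj : g j = w.symm (x j) := he.symm
        rw [hgj, Equiv.apply_symm_apply]
      · left
        rw [Equiv.apply_symm_apply] at hbet
        exact hr_better j (g j) (star j (w (g j)) hbet)
    have stepA' : ∀ j ∈ Sseq w pref' t, r (g j) ≤ r j := by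
      intro j hj
      rcases stepA j hj with h | h
      · exact h.le
      · have hgj : g j = w.symm (x j) := by rw [← h, Equiv.symm_apply_apply]
        rw [hgj, hrpt]
    have hiter : ∀ s, g^[s] (g i) ∈ Sseq w pref' t := by
      intro s
      induction s with
      | zero => exact point_mem w pref' hpref' hSne i
      | succ s ih =>
        rw [Function.iterate_succ_apply']
        exact point_mem w pref' hpref' hSne _
    have key : ∀ s, r (g^[s] (g i)) ≤ r (g i) := by
      intro s
      induction s with
      | zero => exact le_refl _
      | succ s ih =>
        calc r (g^[s + 1] (g i)) = r (g (g^[s] (g i))) := by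
              rw [Function.iterate_succ_apply']
          _ ≤ r (g^[s] (g i)) := stepA' _ (hiter s)
          _ ≤ r (g i) := ih
    obtain ⟨k, rfl⟩ : ∃ k', k = k' + 1 := ⟨k - 1, by omega⟩
    have hri : r i ≤ r (g i) := by
      have hkk := key k
      rw [← Function.iterate_succ_apply, hfix] at hkk
      exact hkk
    rcases stepA i hiS with h | h
    · exact absurd hri (by omega)
    · exact h
  have inv : ∀ t, ∀ i ∈ Sseq w pref' t, w.symm (x i) ∈ Sseq w pref' t := by
    intro t
    induction t with
    | zero => intro i _; rw [Sseq_zero]; exact Finset.mem_univ _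
    | succ t ih =>
      intro i hi
      rw [Sseq_succ, Finset.mem_sdiff] at hi ⊢
      have h1 : w.symm (x i) ∈ Sseq w pref' t := ih i hi.1
      refine ⟨h1, fun hc => ?_⟩
      obtain ⟨m, hm, hme⟩ : ∃ m ∈ cycleAgents w pref' (Sseq w pref' t),
          point w (pref' m) (Sseq w pref' t) m = w.symm (x i) := by
        have himg := cycle_image w pref' hpref' (Sseq w pref' t)
        rw [← himg] at hc
        obtain ⟨m, hm, hme⟩ := Finset.mem_image.1 hc
        exact ⟨m, hm, hme⟩
      have hxm : x m = x i := by
        rw [← claim t ih m hm, hme, Equiv.apply_symm_apply]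
      exact hi.2 (hxinj hxm ▸ hm)
  funext i
  have h2 : i ∈ cycleAgents w pref' (Sseq w pref' (rnd w pref' i)) :=
    rnd_cycle w pref' hpref' i
  rw [TTCstrict_eval w pref' hpref' i, claim (rnd w pref' i) (inv (rnd w pref' i)) i h2]

end KeyLemma

/-- tie-broken version of the key lemma of Sethuraman–Teo: if some
agent is strictly better off under `TTC_≻(R')` than under `TTC_≻(R)` w.r.t. his
tie-broken preferences, then some agent `j` ranks (under the tie-broken misreport)
a house above his original assignment that is worse under his tie-broken truth. -/
theorem TTCtb_improvement_requires_misranking {n : ℕ} {H : Type*} (w : Fin n ≃ H)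
    (R R' : Fin n → WeakOrder H) (tb : Fin n → Fin n → Fin n → Prop)
    (htb : ∀ i, IsTieBreak (tb i)) (i : Fin n)
    (h : tieBroken w (R i) (tb i) (TTCtb w R' tb i) (TTCtb w R tb i)) :
    ∃ (j : Fin n) (h' : H),
      tieBroken w (R j) (tb j) (TTCtb w R tb j) h' ∧
      tieBroken w (R' j) (tb j) h' (TTCtb w R tb j) := by
  by_contra hno
  push_neg at hno
  have hp : ∀ a, IsSLO (fun b c => tieBroken w (R a) (tb a) b c) :=
    fun a => isSLO_tieBroken w (htb a)
  have hp' : ∀ a, IsSLO (fun b c => tieBroken w (R' a) (tb a) b c) :=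
    fun a => isSLO_tieBroken w (htb a)
  have hTT : TTCtb w R tb = TTCstrict w (fun a => tieBroken w (R a) (tb a)) := rfl
  have hTT' : TTCtb w R' tb = TTCstrict w (fun a => tieBroken w (R' a) (tb a)) := rfl
  have star : ∀ j h2, tieBroken w (R' j) (tb j)
      h2 (TTCstrict w (fun a => tieBroken w (R a) (tb a)) j) →
      tieBroken w (R j) (tb j)
      h2 (TTCstrict w (fun a => tieBroken w (R a) (tb a)) j) := by
    intro j h2 hc
    rcases (hp j).1 h2 (TTCstrict w (fun a => tieBroken w (R a) (tb a)) j) with he | hyes | hbad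
    · rw [he] at hc
      exact absurd hc ((hp' j).2.2 _)
    · exact hyes
    · exact absurd hc (hno j h2 (hTT ▸ hbad))
  have heq : TTCstrict w (fun a => tieBroken w (R' a) (tb a))
      = TTCstrict w (fun a => tieBroken w (R a) (tb a)) :=
    TTC_eq_of_star w _ _ hp hp' star
  have hirr : tieBroken w (R i) (tb i)
      (TTCstrict w (fun a => tieBroken w (R a) (tb a)) i)
      (TTCstrict w (fun a => tieBroken w (R a) (tb a)) i) := by
    rw [hTT', hTT, heq] at h
    exact h
  exact (hp i).2.2 _ hirr


end ShapleyScarf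
end
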